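/- arXiv:2305.00778 — 4 statements merged into one kernel-verified Lean document; each statement's English description precedes it below -/
import Mathlib

section
/- Let α ∈ (0,1], a, b with ab > 0, and ε ≥ 0. The functions ũ(x,t) = e^(−α²εx/(1+αεt^α))·x^(1+√(ab))·(1+αεt^α)^(−√(ab)−2) and ṽ(x,t) = −(√(ab)/a)·ũ(x,t) satisfy the system T_t^α u = x·u_xx + a·v_x, T_t^α v = x·v_xx + b·u_x for x > 0, t > 0. -/
open Real

lemma had_spatial1 (c P s y : ℝ) (hy : y ≠ 0) :
    HasDerivAt (fun z : ℝ => Real.exp (-(c*z)/P) * z^(1+s) * P^(-s-2))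
      (Real.exp (-(c*y)/P) * P^(-s-2) * ((1+s)*y^s - c/P*y^(1+s))) y := by
  have h1 : HasDerivAt (fun z : ℝ => -(c*z)/P) (-(c/P)) y := by
    have h0 : (fun z : ℝ => -(c*z)/P) = fun z => -(c/P) * z := by funext z; ring
    rw [h0]; simpa using (hasDerivAt_id y).const_mul (-(c/P))
  have h3 : HasDerivAt (fun z : ℝ => z^(1+s)) ((1+s)*y^(1+s-1)) y :=
    Real.hasDerivAt_rpow_const (Or.inl hy)
  have h4 := (h1.exp.mul h3).mul_const (P^(-s-2))
  refine h4.congr_deriv ?_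
  rw [show (1+s-1:ℝ) = s by ring]
  ring

lemma had_spatial2 (c P s y : ℝ) (hy : y ≠ 0) :
    HasDerivAt (fun z : ℝ => Real.exp (-(c*z)/P) * P^(-s-2) * ((1+s)*z^s - c/P*z^(1+s)))
      (Real.exp (-(c*y)/P) * P^(-s-2) *
        (-(c/P)*((1+s)*y^s - c/P*y^(1+s)) + ((1+s)*(s*y^(s-1)) - c/P*((1+s)*y^(1+s-1))))) y := by
  have h1 : HasDerivAt (fun z : ℝ => -(c*z)/P) (-(c/P)) y := by
    have h0 : (fun z : ℝ => -(c*z)/P) = fun z => -(c/P) * z := by funext z; ring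
    rw [h0]; simpa using (hasDerivAt_id y).const_mul (-(c/P))
  have hg : HasDerivAt (fun z : ℝ => (1+s)*z^s - c/P*z^(1+s))
      ((1+s)*(s*y^(s-1)) - c/P*((1+s)*y^(1+s-1))) y :=
    ((Real.hasDerivAt_rpow_const (Or.inl hy)).const_mul (1+s)).sub
      ((Real.hasDerivAt_rpow_const (Or.inl hy)).const_mul (c/P))
  have h := (h1.exp.mul_const (P^(-s-2))).mul hg
  refine h.congr_deriv ?_
  ring

lemma had_time (c k s xv α t : ℝ) (ht : 0 < t) (hP : (1:ℝ) + k*t^α ≠ 0) :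
    HasDerivAt (fun τ : ℝ => Real.exp (-(c*xv)/(1+k*τ^α)) * xv^(1+s) * (1+k*τ^α)^(-s-2))
      (Real.exp (-(c*xv)/(1+k*t^α)) * xv^(1+s) *
        (c*xv*(k*(α*t^(α-1)))/(1+k*t^α)^2 * (1+k*t^α)^(-s-2)
          + (1+k*t^α)^(-s-2-1) * (-s-2) * (k*(α*t^(α-1))))) t := by
  have hPt : HasDerivAt (fun τ : ℝ => 1 + k*τ^α) (k*(α*t^(α-1))) t := by
    have h := ((Real.hasDerivAt_rpow_const (p := α) (Or.inl ht.ne')).const_mul k).const_add 1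
    simpa using h
  have hinner : HasDerivAt (fun τ : ℝ => -(c*xv)/(1+k*τ^α))
      (c*xv*(k*(α*t^(α-1)))/(1+k*t^α)^2) t := by
    have h := (hasDerivAt_const t (-(c*xv))).div hPt hP
    refine h.congr_deriv ?_
    ring
  have hrp : HasDerivAt (fun τ : ℝ => (1+k*τ^α)^(-s-2))
      ((k*(α*t^(α-1))) * (-s-2) * (1+k*t^α)^(-s-2-1)) t :=
    hPt.rpow_const (Or.inl hP)
  have h := (hinner.exp.mul_const (xv^(1+s))).mul hrp
  refine h.congr_deriv ?_
  ring

lemma pair_alg (tp x a b rs Dt D2 F1 : ℝ) (ha : a ≠ 0) (hss : rs*rs = a*b)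
    (E1 : tp*Dt = x*D2 + a*(-(rs/a)*F1)) :
    tp*(-(rs/a)*Dt) = x*(-(rs/a)*D2) + b*F1 := by
  apply mul_left_cancel₀ ha
  calc a * (tp*(-(rs/a)*Dt)) = -rs*(tp*Dt) := by field_simp
    _ = -rs*(x*D2 + a*(-(rs/a)*F1)) := by rw [E1]
    _ = -rs*(x*D2) + rs*rs*F1 := by field_simp; ring
    _ = a*(x*(-(rs/a)*D2) + b*F1) := by rw [hss]; field_simp

/-- The group-invariant pair
`ũ(x,t) = e^(−α²εx/(1+αεt^α))·(1+αεt^α)^(−√(ab))`, `ṽ = −(√(ab)/a)·ũ` with `ũ(x,t) = e^(−α²εx/(1+αεt^α))·x^(1+√(ab))·(1+αεt^α)^(−√(ab)−2)`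
solves the system `T_t^α u = x·u_xx + a·v_x`, `T_t^α v = x·v_xx + b·u_x`
for `x > 0`, `t > 0`, where `T_t^α f = t^(1−α)·∂_t f`. -/
theorem invariant_solution_two (α a b ε : ℝ) (hα : α ∈ Set.Ioc (0 : ℝ) 1)
    (hab : 0 < a * b) (hε : 0 ≤ ε)
    (u v : ℝ → ℝ → ℝ)
    (hu : ∀ x t : ℝ, u x t =
      Real.exp (-(α ^ 2 * ε * x) / (1 + α * ε * t ^ α)) *
        x ^ (1 + Real.sqrt (a * b)) * (1 + α * ε * t ^ α) ^ (-Real.sqrt (a * b) - 2))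
    (hv : ∀ x t : ℝ, v x t = -(Real.sqrt (a * b) / a) * u x t) :
    ∀ x t : ℝ, 0 < x → 0 < t →
      (t ^ (1 - α) * deriv (fun s => u x s) t =
        x * deriv (deriv (fun y => u y t)) x + a * deriv (fun y => v y t) x) ∧
      (t ^ (1 - α) * deriv (fun s => v x s) t =
        x * deriv (deriv (fun y => v y t)) x + b * deriv (fun y => u y t) x) := by
  intro x t hx ht
  have ha : a ≠ 0 := by
    intro h; rw [h, zero_mul] at hab; exact lt_irrefl 0 hab
  set rs := Real.sqrt (a*b) with hrs
  have hss : rs*rs = a*b := Real.mul_self_sqrt hab.le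
  have hP : (0:ℝ) < 1 + α*ε*t^α := by
    have h1 : 0 ≤ α*ε*t^α :=
      mul_nonneg (mul_nonneg hα.1.le hε) (Real.rpow_nonneg ht.le α)
    linarith
  -- function identities
  have hut : (fun τ => u x τ)
      = (fun τ : ℝ => Real.exp (-(α^2*ε*x)/(1+α*ε*τ^α)) * x^(1+rs) * (1+α*ε*τ^α)^(-rs-2)) :=
    funext fun τ => hu x τ
  have hux : (fun z => u z t)
      = (fun z : ℝ => Real.exp (-(α^2*ε*z)/(1+α*ε*t^α)) * z^(1+rs) * (1+α*ε*t^α)^(-rs-2)) :=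
    funext fun z => hu z t
  have hvx : (fun z => v z t)
      = (fun z : ℝ => -(rs/a) *
          (Real.exp (-(α^2*ε*z)/(1+α*ε*t^α)) * z^(1+rs) * (1+α*ε*t^α)^(-rs-2))) := by
    funext z; rw [hv, hu]
  have hvt : (fun τ => v x τ)
      = (fun τ : ℝ => -(rs/a) *
          (Real.exp (-(α^2*ε*x)/(1+α*ε*τ^α)) * x^(1+rs) * (1+α*ε*τ^α)^(-rs-2))) := by
    funext τ; rw [hv, hu]
  -- time derivatives
  have hTime := had_time (α^2*ε) (α*ε) rs x α t ht hP.ne'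
  have hDut : deriv (fun τ => u x τ) t
      = Real.exp (-(α^2*ε*x)/(1+α*ε*t^α)) * x^(1+rs) *
        (α^2*ε*x*(α*ε*(α*t^(α-1)))/(1+α*ε*t^α)^2 * (1+α*ε*t^α)^(-rs-2)
          + (1+α*ε*t^α)^(-rs-2-1) * (-rs-2) * (α*ε*(α*t^(α-1)))) := by
    rw [hut]; exact hTime.deriv
  have hDvt : deriv (fun τ => v x τ) t
      = -(rs/a) * (Real.exp (-(α^2*ε*x)/(1+α*ε*t^α)) * x^(1+rs) *
        (α^2*ε*x*(α*ε*(α*t^(α-1)))/(1+α*ε*t^α)^2 * (1+α*ε*t^α)^(-rs-2)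
          + (1+α*ε*t^α)^(-rs-2-1) * (-rs-2) * (α*ε*(α*t^(α-1))))) := by
    rw [hvt]; exact (hTime.const_mul (-(rs/a))).deriv
  -- first spatial derivatives
  have hF1 : deriv (fun z => u z t) x
      = Real.exp (-(α^2*ε*x)/(1+α*ε*t^α)) * (1+α*ε*t^α)^(-rs-2) *
        ((1+rs)*x^rs - α^2*ε/(1+α*ε*t^α)*x^(1+rs)) := by
    rw [hux]; exact (had_spatial1 (α^2*ε) (1+α*ε*t^α) rs x hx.ne').deriv
  have hV1 : deriv (fun z => v z t) x
      = -(rs/a) * (Real.exp (-(α^2*ε*x)/(1+α*ε*t^α)) * (1+α*ε*t^α)^(-rs-2) *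
        ((1+rs)*x^rs - α^2*ε/(1+α*ε*t^α)*x^(1+rs))) := by
    rw [hvx]
    exact ((had_spatial1 (α^2*ε) (1+α*ε*t^α) rs x hx.ne').const_mul (-(rs/a))).deriv
  -- second spatial derivatives
  have hev_u : deriv (fun z => u z t) =ᶠ[nhds x]
      (fun y : ℝ => Real.exp (-(α^2*ε*y)/(1+α*ε*t^α)) * (1+α*ε*t^α)^(-rs-2) *
        ((1+rs)*y^rs - α^2*ε/(1+α*ε*t^α)*y^(1+rs))) := by
    filter_upwards [Ioi_mem_nhds hx] with y hy
    rw [hux]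
    exact (had_spatial1 (α^2*ε) (1+α*ε*t^α) rs y (ne_of_gt hy)).deriv
  have hev_v : deriv (fun z => v z t) =ᶠ[nhds x]
      (fun y : ℝ => -(rs/a) * (Real.exp (-(α^2*ε*y)/(1+α*ε*t^α)) * (1+α*ε*t^α)^(-rs-2) *
        ((1+rs)*y^rs - α^2*ε/(1+α*ε*t^α)*y^(1+rs)))) := by
    filter_upwards [Ioi_mem_nhds hx] with y hy
    rw [hvx]
    exact ((had_spatial1 (α^2*ε) (1+α*ε*t^α) rs y (ne_of_gt hy)).const_mul (-(rs/a))).deriv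
  have hSp2 := had_spatial2 (α^2*ε) (1+α*ε*t^α) rs x hx.ne'
  have hD2u : deriv (deriv (fun y => u y t)) x
      = Real.exp (-(α^2*ε*x)/(1+α*ε*t^α)) * (1+α*ε*t^α)^(-rs-2) *
        (-(α^2*ε/(1+α*ε*t^α))*((1+rs)*x^rs - α^2*ε/(1+α*ε*t^α)*x^(1+rs))
          + ((1+rs)*(rs*x^(rs-1)) - α^2*ε/(1+α*ε*t^α)*((1+rs)*x^(1+rs-1)))) := by
    rw [hev_u.deriv_eq]; exact hSp2.deriv
  have hD2v : deriv (deriv (fun y => v y t)) x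
      = -(rs/a) * (Real.exp (-(α^2*ε*x)/(1+α*ε*t^α)) * (1+α*ε*t^α)^(-rs-2) *
        (-(α^2*ε/(1+α*ε*t^α))*((1+rs)*x^rs - α^2*ε/(1+α*ε*t^α)*x^(1+rs))
          + ((1+rs)*(rs*x^(rs-1)) - α^2*ε/(1+α*ε*t^α)*((1+rs)*x^(1+rs-1))))) := by
    rw [hev_v.deriv_eq]; exact (hSp2.const_mul (-(rs/a))).deriv
  -- main algebra
  have key : t ^ (1 - α) * deriv (fun s => u x s) t =
      x * deriv (deriv (fun y => u y t)) x + a * deriv (fun y => v y t) x := by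
    rw [hDut, hD2u, hV1]
    rw [show a * (-(rs/a) * (Real.exp (-(α^2*ε*x)/(1+α*ε*t^α)) * (1+α*ε*t^α)^(-rs-2) *
        ((1+rs)*x^rs - α^2*ε/(1+α*ε*t^α)*x^(1+rs)))) =
        -rs * (Real.exp (-(α^2*ε*x)/(1+α*ε*t^α)) * (1+α*ε*t^α)^(-rs-2) *
        ((1+rs)*x^rs - α^2*ε/(1+α*ε*t^α)*x^(1+rs))) from by field_simp]
    rw [Real.rpow_sub ht, Real.rpow_one, Real.rpow_sub_one ht.ne' α,
      Real.rpow_sub_one hP.ne' (-rs-2), Real.rpow_sub_one hx.ne' rs,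
      show (1+rs-1:ℝ) = rs by ring, Real.rpow_add hx, Real.rpow_one]
    have htα : t^α ≠ 0 := (Real.rpow_pos_of_pos ht α).ne'
    have hP' : (1 + α*ε*t^α) ≠ 0 := hP.ne'
    generalize (1 + α*ε*t^α) = Q at hP' ⊢
    field_simp
    ring
  refine ⟨key, ?_⟩
  rw [hDvt, hD2v, hF1]
  rw [hDut, hD2u, hV1] at key
  exact pair_alg _ _ _ _ _ _ _ _ ha hss key
end

section
/- Let m, n, c be constants with mn > 0. The time-independent pair (u₂, v₂) = (−(√(mn)/n)·x^(1+√(mn)−c), x^(1+√(mn)−c)) solves the system T_t^α u = u_xx + (c/x)·u_x + (m/x)·v_x, T_t^α v = v_xx + (c/x)·v_x + (n/x)·u_x for x > 0. -/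
open Real

/-- The time-independent pair
`(u₂, v₂) = (−(√(mn)/n)·x^(1+√(mn)−c), x^(1+√(mn)−c))` solves the system
`T_t^α u = u_xx + (c/x)·u_x + (m/x)·v_x`, `T_t^α v = v_xx + (c/x)·v_x + (n/x)·u_x`
for `x > 0`; for time-independent functions `T_t^α u = 0`. -/
theorem steady_pair_solves_system_k (α m n c : ℝ) (hα : α ∈ Set.Ioc (0 : ℝ) 1)
    (hmn : 0 < m * n)
    (u v : ℝ → ℝ)
    (hu : ∀ x : ℝ, u x = -(Real.sqrt (m * n) / n) * x ^ (1 + Real.sqrt (m * n) - c))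
    (hv : ∀ x : ℝ, v x = x ^ (1 + Real.sqrt (m * n) - c)) :
    ∀ x : ℝ, 0 < x →
      ((0 : ℝ) = deriv (deriv u) x + (c / x) * deriv u x + (m / x) * deriv v x) ∧
      ((0 : ℝ) = deriv (deriv v) x + (c / x) * deriv v x + (n / x) * deriv u x) := by
  intro x hx
  set s := Real.sqrt (m * n) with hs
  set p := 1 + s - c with hp
  have hn : n ≠ 0 := by rintro rfl; simp at hmn
  have hs2 : s * s = m * n := Real.mul_self_sqrt hmn.le
  have hvf : v = fun x => x ^ p := funext hv
  have huf : u = fun x => -(s / n) * x ^ p := funext hu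
  have hdv : ∀ y : ℝ, y ≠ 0 → deriv v y = p * y ^ (p - 1) := by
    intro y hy
    rw [hvf]; exact Real.deriv_rpow_const _ _
  have hdu : ∀ y : ℝ, y ≠ 0 → deriv u y = -(s / n) * (p * y ^ (p - 1)) := by
    intro y hy
    rw [huf, deriv_const_mul _ (Real.differentiableAt_rpow_const_of_ne p hy),
      Real.deriv_rpow_const _ _]
  have hev : ∀ᶠ y in nhds x, y ≠ 0 :=
    eventually_ne_nhds hx.ne'
  have hddv : deriv (deriv v) x = p * ((p - 1) * x ^ (p - 1 - 1)) := by
    have h1 : deriv v =ᶠ[nhds x] fun y => p * y ^ (p - 1) :=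
      hev.mono fun y hy => hdv y hy
    rw [h1.deriv_eq, deriv_const_mul _ (Real.differentiableAt_rpow_const_of_ne _ hx.ne'),
      Real.deriv_rpow_const _ _]
  have hddu : deriv (deriv u) x = -(s / n) * (p * ((p - 1) * x ^ (p - 1 - 1))) := by
    have h1 : deriv u =ᶠ[nhds x] fun y => -(s / n) * (p * y ^ (p - 1)) :=
      hev.mono fun y hy => hdu y hy
    rw [h1.deriv_eq]
    rw [deriv_const_mul _ (((Real.differentiableAt_rpow_const_of_ne _ hx.ne')).const_mul p),
      deriv_const_mul _ (Real.differentiableAt_rpow_const_of_ne _ hx.ne'),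
      Real.deriv_rpow_const _ _]
  have hx1 : x ^ (p - 1) = x ^ (p - 1 - 1) * x := by
    rw [← Real.rpow_add_one hx.ne' (p - 1 - 1)]; ring_nf
  rw [hddv, hddu, hdu x hx.ne', hdv x hx.ne', hx1]
  have hX : x ^ (p - 1 - 1) = x ^ (p - 1 - 1) := rfl
  generalize x ^ (p - 1 - 1) = X
  constructor
  · field_simp
    ring_nf
    linear_combination (X * (s - c + 1)) * hs2
  · field_simp
    ring_nf
    rw [hp]; ring
end

section
/- Let α ∈ (0,1], t > 0, x > 0, and β = √(ab) with ab > 0. Then the Laplace transform in λ of the function y ↦ (α/t^α)·e^(−α(x+y)/t^α)·(y/x)^((β−1)/2)·I_{β−1}(2α√(xy)/t^α) equals e^(−λx/(1+λt^α/α))·(1+λt^α/α)^(−β), where I_ν is the modified Bessel function of the first kind. -/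
open Real MeasureTheory

/-- The modified Bessel function of the first kind,
`I_ν(z) = Σ_{n=0}^∞ (z/2)^(2n+ν) / (n!·Γ(ν+n+1))`. -/
noncomputable def besselI (ν z : ℝ) : ℝ :=
  ∑' n : ℕ, (z / 2) ^ (2 * (n : ℝ) + ν) / (n.factorial * Real.Gamma (ν + n + 1))

/-- The Laplace transform in `y` of
`y ↦ (α/t^α)·e^(−α(x+y)/t^α)·(y/x)^((β−1)/2)·I_{β−1}(2α√(xy)/t^α)` at `λ` equals
`e^(−λx/(1+λt^α/α))·(1+λt^α/α)^(−β)`, with `β = √(ab)`, `ab > 0`. -/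
theorem laplace_invariant_solution_one (α t x a b l : ℝ)
    (hα : α ∈ Set.Ioc (0 : ℝ) 1) (ht : 0 < t) (hx : 0 < x) (hab : 0 < a * b)
    (hl : 0 < l) (β : ℝ) (hβ : β = Real.sqrt (a * b)) :
    (∫ y in Set.Ioi (0 : ℝ),
        (α / t ^ α) * Real.exp (-(α * (x + y)) / t ^ α) *
          (y / x) ^ ((β - 1) / 2) * besselI (β - 1) (2 * α * Real.sqrt (x * y) / t ^ α) *
            Real.exp (-l * y)) =
      Real.exp (-(l * x) / (1 + l * t ^ α / α)) * (1 + l * t ^ α / α) ^ (-β) := by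
  obtain ⟨hα0, hα1⟩ := hα
  have hβ0 : 0 < β := hβ ▸ Real.sqrt_pos.mpr hab
  have htα : 0 < t ^ α := Real.rpow_pos_of_pos ht α
  set c : ℝ := α / t ^ α with hc_def
  have hc : 0 < c := div_pos hα0 htα
  set r : ℝ := c + l with hr_def
  have hr : 0 < r := by positivity
  set q : ℝ := c ^ 2 * x / r with hq_def
  set K : ℝ := c ^ β * Real.exp (-(c * x)) * (1 / r) ^ β with hK_def
  have hGamma : ∀ n : ℕ, 0 < Real.Gamma (β + n) := fun n =>
    Real.Gamma_pos_of_pos (add_pos_of_pos_of_nonneg hβ0 (Nat.cast_nonneg n))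
  set F : ℕ → ℝ → ℝ := fun n y =>
    (c ^ β * Real.exp (-(c * x)) * (c ^ 2 * x) ^ n / (n.factorial * Real.Gamma (β + n))) *
      (y ^ ((n : ℝ) + β - 1) * Real.exp (-(r * y))) with hF_def
  -- pointwise series expansion of the integrand
  have hpt : ∀ y ∈ Set.Ioi (0 : ℝ),
      c * Real.exp (-(α * (x + y)) / t ^ α) *
          (y / x) ^ ((β - 1) / 2) * besselI (β - 1) (2 * α * Real.sqrt (x * y) / t ^ α) *
            Real.exp (-l * y) = ∑' n : ℕ, F n y := by
    intro y hy
    rw [Set.mem_Ioi] at hy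
    have hxy : 0 < x * y := mul_pos hx hy
    have hsqrt : 0 < Real.sqrt (x * y) := Real.sqrt_pos.mpr hxy
    rw [besselI, ← tsum_mul_left, ← tsum_mul_right]
    refine tsum_congr fun n => ?_
    have e1 : 2 * α * Real.sqrt (x * y) / t ^ α / 2 = c * Real.sqrt (x * y) := by
      rw [hc_def]; ring
    have e2 : Real.Gamma (β - 1 + ↑n + 1) = Real.Gamma (β + ↑n) := by ring_nf
    have e3 : Real.exp (-(α * (x + y)) / t ^ α) = Real.exp (-(c * x)) * Real.exp (-(c * y)) := by
      rw [← Real.exp_add]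
      congr 1
      rw [hc_def]
      field_simp
      ring
    have e4 : Real.exp (-(r * y)) = Real.exp (-(c * y)) * Real.exp (-l * y) := by
      rw [← Real.exp_add, hr_def]
      ring_nf
    -- key rpow identity
    have h2pos : 0 < (y / x) ^ ((β - 1) / 2) := Real.rpow_pos_of_pos (div_pos hy hx) _
    have h3pos : 0 < (c * Real.sqrt (x * y)) ^ (2 * (n : ℝ) + (β - 1)) :=
      Real.rpow_pos_of_pos (mul_pos hc hsqrt) _
    have hcβ : 0 < c ^ β := Real.rpow_pos_of_pos hc β
    have hpow : 0 < (c ^ 2 * x) ^ n := pow_pos (mul_pos (pow_pos hc 2) hx) n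
    have hyr : 0 < y ^ ((n : ℝ) + β - 1) := Real.rpow_pos_of_pos hy _
    have key : c * (y / x) ^ ((β - 1) / 2) * (c * Real.sqrt (x * y)) ^ (2 * (n : ℝ) + (β - 1))
        = c ^ β * (c ^ 2 * x) ^ n * y ^ ((n : ℝ) + β - 1) := by
      have hL : 0 < c * (y / x) ^ ((β - 1) / 2) *
          (c * Real.sqrt (x * y)) ^ (2 * (n : ℝ) + (β - 1)) :=
        mul_pos (mul_pos hc h2pos) h3pos
      have hR : 0 < c ^ β * (c ^ 2 * x) ^ n * y ^ ((n : ℝ) + β - 1) :=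
        mul_pos (mul_pos hcβ hpow) hyr
      have hlog : Real.log (c * (y / x) ^ ((β - 1) / 2) *
            (c * Real.sqrt (x * y)) ^ (2 * (n : ℝ) + (β - 1)))
          = Real.log (c ^ β * (c ^ 2 * x) ^ n * y ^ ((n : ℝ) + β - 1)) := by
        rw [Real.log_mul (mul_pos hc h2pos).ne' h3pos.ne', Real.log_mul hc.ne' h2pos.ne',
          Real.log_rpow (div_pos hy hx), Real.log_div hy.ne' hx.ne',
          Real.log_rpow (mul_pos hc hsqrt), Real.log_mul hc.ne' hsqrt.ne',
          Real.log_sqrt hxy.le, Real.log_mul hx.ne' hy.ne',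
          Real.log_mul (mul_pos hcβ hpow).ne' hyr.ne', Real.log_mul hcβ.ne' hpow.ne',
          Real.log_rpow hc, Real.log_pow, Real.log_mul (pow_pos hc 2).ne' hx.ne',
          Real.log_pow, Real.log_rpow hy]
        push_cast
        ring
      calc c * (y / x) ^ ((β - 1) / 2) * (c * Real.sqrt (x * y)) ^ (2 * (n : ℝ) + (β - 1))
          = Real.exp (Real.log (c * (y / x) ^ ((β - 1) / 2) *
              (c * Real.sqrt (x * y)) ^ (2 * (n : ℝ) + (β - 1)))) := (Real.exp_log hL).symm
        _ = Real.exp (Real.log (c ^ β * (c ^ 2 * x) ^ n * y ^ ((n : ℝ) + β - 1))) := by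
              rw [hlog]
        _ = c ^ β * (c ^ 2 * x) ^ n * y ^ ((n : ℝ) + β - 1) := Real.exp_log hR
    rw [hF_def]
    simp only [e1, e2, e3, e4]
    generalize (y / x) ^ ((β - 1) / 2) = P at key ⊢
    generalize (c * Real.sqrt (x * y)) ^ (2 * (n : ℝ) + (β - 1)) = S at key ⊢
    generalize c ^ β = Cb at key ⊢
    generalize ((c : ℝ) ^ 2 * x) ^ n = Cn at key ⊢
    generalize y ^ ((n : ℝ) + β - 1) = Y at key ⊢
    linear_combination (Real.exp (-(c * x)) * Real.exp (-(c * y)) * Real.exp (-l * y) *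
      ((n.factorial : ℝ) * Real.Gamma (β + ↑n))⁻¹) * key
  -- integrability of each term
  have hint : ∀ n : ℕ, Integrable (F n) (volume.restrict (Set.Ioi 0)) := by
    intro n
    have hs : (-1 : ℝ) < (n : ℝ) + β - 1 := by
      have := Nat.cast_nonneg (α := ℝ) n
      linarith
    have h1 := integrableOn_rpow_mul_exp_neg_mul_rpow (p := 1) hs one_pos hr
    simp only [Real.rpow_one, neg_mul] at h1
    exact h1.const_mul _
  -- value of each term integral
  have hval : ∀ n : ℕ, (∫ y in Set.Ioi (0 : ℝ), F n y) = K * (q ^ n / n.factorial) := by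
    intro n
    have ha : (0 : ℝ) < (n : ℝ) + β := add_pos_of_nonneg_of_pos (Nat.cast_nonneg n) hβ0
    have h1 := Real.integral_rpow_mul_exp_neg_mul_Ioi ha hr
    rw [hF_def]
    simp only [integral_const_mul]
    rw [h1]
    have hrn : (r : ℝ) ^ n ≠ 0 := (pow_pos hr n).ne'
    have hfac : ((n.factorial : ℝ)) ≠ 0 := Nat.cast_ne_zero.mpr n.factorial_ne_zero
    have hG : Real.Gamma (β + ↑n) ≠ 0 := (hGamma n).ne'
    have e5 : Real.Gamma ((n : ℝ) + β) = Real.Gamma (β + ↑n) := by rw [add_comm]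
    have e6 : (1 / r : ℝ) ^ ((n : ℝ) + β) = (1 / r) ^ n * (1 / r) ^ β := by
      rw [Real.rpow_add (by positivity), Real.rpow_natCast]
    rw [e5, e6, hK_def, hq_def]
    field_simp
    ring
  -- summability of integrals of norms
  have hnorm : ∀ n : ℕ, (∫ y in Set.Ioi (0 : ℝ), ‖F n y‖) = ∫ y in Set.Ioi (0 : ℝ), F n y := by
    intro n
    refine setIntegral_congr_fun measurableSet_Ioi fun y hy => ?_
    rw [Set.mem_Ioi] at hy
    refine Real.norm_of_nonneg ?_
    rw [hF_def]
    have h1 : (0 : ℝ) ≤ c ^ β * Real.exp (-(c * x)) * (c ^ 2 * x) ^ n := by positivity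
    have h2 : (0 : ℝ) ≤ (n.factorial : ℝ) * Real.Gamma (β + ↑n) :=
      mul_nonneg (Nat.cast_nonneg _) (hGamma n).le
    exact mul_nonneg (div_nonneg h1 h2) (by positivity)
  have hsum : Summable fun n : ℕ => ∫ y in Set.Ioi (0 : ℝ), ‖F n y‖ := by
    refine ((Real.summable_pow_div_factorial q).mul_left K).congr fun n => ?_
    rw [hnorm n, hval n]
  -- put everything together
  rw [setIntegral_congr_fun measurableSet_Ioi hpt,
    ← MeasureTheory.integral_tsum_of_summable_integral_norm hint hsum,
    tsum_congr hval, tsum_mul_left]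
  have hexp : (∑' n : ℕ, q ^ n / (n.factorial : ℝ)) = Real.exp q := by
    rw [Real.exp_eq_exp_ℝ, NormedSpace.exp_eq_tsum_div]
  rw [hexp]
  -- final algebraic identification
  have hd : 1 + l * t ^ α / α = r / c := by
    rw [hr_def, hc_def]
    field_simp
  rw [hd, hK_def, hq_def]
  have e7 : Real.exp (-(c * x)) * Real.exp (c ^ 2 * x / r) = Real.exp (-(l * x) / (r / c)) := by
    rw [← Real.exp_add]
    congr 1
    field_simp
    ring
  have e8 : c ^ β * (1 / r) ^ β = (r / c) ^ (-β) := by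
    rw [Real.rpow_neg (by positivity), ← Real.mul_rpow hc.le (by positivity),
      ← Real.inv_rpow (by positivity)]
    congr 1
    field_simp
  calc c ^ β * Real.exp (-(c * x)) * (1 / r) ^ β * Real.exp (c ^ 2 * x / r)
      = (c ^ β * (1 / r) ^ β) * (Real.exp (-(c * x)) * Real.exp (c ^ 2 * x / r)) := by ring
    _ = Real.exp (-(l * x) / (r / c)) * (r / c) ^ (-β) := by rw [e7, e8]; ring
end

section
/- Let α ∈ (0,1], t > 0, x > 0, and β = √(ab) with ab > 0. Then the Laplace transform in λ of the function y ↦ x^(1+β)·(α/t^α)·e^(−α(x+y)/t^α)·(y/x)^((1+β)/2)·I_{β+1}(2α√(xy)/t^α) equals e^(−λx/(1+λt^α/α))·x^(1+β)·(1+λt^α/α)^(−β−2). -/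
open Real MeasureTheory

/-- The Laplace transform in `y` of
`y ↦ (α/t^α)·e^(−α(x+y)/t^α)·x^(1+β)·(y/x)^((1+β)/2)·I_{β+1}(2α√(xy)/t^α)` at `λ` equals
`e^(−λx/(1+λt^α/α))·x^(1+β)·(1+λt^α/α)^(−β−2)`, with `β = √(ab)`, `ab > 0`. -/
theorem laplace_invariant_solution_two (α t x a b l : ℝ)
    (hα : α ∈ Set.Ioc (0 : ℝ) 1) (ht : 0 < t) (hx : 0 < x) (hab : 0 < a * b)
    (hl : 0 < l) (β : ℝ) (hβ : β = Real.sqrt (a * b)) :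
    (∫ y in Set.Ioi (0 : ℝ),
        x ^ (1 + β) * (α / t ^ α) * Real.exp (-(α * (x + y)) / t ^ α) *
          (y / x) ^ ((1 + β) / 2) * besselI (β + 1) (2 * α * Real.sqrt (x * y) / t ^ α) *
            Real.exp (-l * y)) =
      Real.exp (-(l * x) / (1 + l * t ^ α / α)) * x ^ (1 + β) * (1 + l * t ^ α / α) ^ (-β - 2) := by
  obtain ⟨hα0, _⟩ := hα
  have htα : 0 < t ^ α := Real.rpow_pos_of_pos ht α
  have hβ0 : 0 < β := by rw [hβ]; exact Real.sqrt_pos.mpr hab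
  set c : ℝ := α / t ^ α with hc_def
  have hc : 0 < c := div_pos hα0 htα
  set m : ℝ := c + l with hm_def
  have hm : 0 < m := by positivity
  set K : ℕ → ℝ := fun n =>
    c * Real.exp (-(c * x)) * (c ^ (2 * (n : ℝ) + (β + 1)) * x ^ ((n : ℝ) + β + 1)) /
      (n.factorial * Real.Gamma (β + 1 + n + 1)) with hK_def
  set f : ℕ → ℝ → ℝ := fun n y => K n * (y ^ ((n : ℝ) + β + 1) * Real.exp (-(m * y)))
    with hf_def
  have hΓ : ∀ n : ℕ, 0 < Real.Gamma (β + 1 + n + 1) := fun n =>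
    Real.Gamma_pos_of_pos (by positivity)
  -- pointwise identity
  have hpt : ∀ y ∈ Set.Ioi (0 : ℝ),
      x ^ (1 + β) * (α / t ^ α) * Real.exp (-(α * (x + y)) / t ^ α) *
        (y / x) ^ ((1 + β) / 2) * besselI (β + 1) (2 * α * Real.sqrt (x * y) / t ^ α) *
          Real.exp (-l * y) = ∑' n : ℕ, f n y := by
    intro y hy
    have hy0 : (0 : ℝ) < y := hy
    have h2 : 2 * α * Real.sqrt (x * y) / t ^ α / 2 = c * (Real.sqrt x * Real.sqrt y) := by
      rw [Real.sqrt_mul hx.le, hc_def]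
      field_simp
    simp only [besselI, h2]
    rw [show x ^ (1 + β) * c * Real.exp (-(α * (x + y)) / t ^ α) * (y / x) ^ ((1 + β) / 2) *
        (∑' n : ℕ, (c * (Real.sqrt x * Real.sqrt y)) ^ (2 * (n : ℝ) + (β + 1)) /
          (n.factorial * Real.Gamma (β + 1 + n + 1))) * Real.exp (-l * y)
        = ∑' n : ℕ, (x ^ (1 + β) * c * Real.exp (-(α * (x + y)) / t ^ α) *
            (y / x) ^ ((1 + β) / 2) * Real.exp (-l * y)) *
            ((c * (Real.sqrt x * Real.sqrt y)) ^ (2 * (n : ℝ) + (β + 1)) /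
              (n.factorial * Real.Gamma (β + 1 + n + 1)))
      from by rw [tsum_mul_left]; ring]
    refine tsum_congr fun n => ?_
    set s : ℝ := 2 * (n : ℝ) + (β + 1) with hs_def
    have e1 : Real.exp (-(α * (x + y)) / t ^ α) = Real.exp (-(c * x)) * Real.exp (-(c * y)) := by
      rw [← Real.exp_add]
      congr 1
      rw [hc_def]
      field_simp
      ring
    have e2 : Real.exp (-(c * y)) * Real.exp (-l * y) = Real.exp (-(m * y)) := by
      rw [← Real.exp_add]
      congr 1
      rw [hm_def]; ring
    have e3 : (y / x) ^ ((1 + β) / 2) = y ^ ((1 + β) / 2) / x ^ ((1 + β) / 2) :=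
      Real.div_rpow hy0.le hx.le _
    have e4 : (c * (Real.sqrt x * Real.sqrt y)) ^ s
        = c ^ s * (x ^ (s / 2) * y ^ (s / 2)) := by
      rw [Real.mul_rpow hc.le (by positivity), Real.mul_rpow (Real.sqrt_nonneg x)
        (Real.sqrt_nonneg y), Real.sqrt_eq_rpow, Real.sqrt_eq_rpow,
        ← Real.rpow_mul hx.le, ← Real.rpow_mul hy0.le]
      ring_nf
    have eX : x ^ (1 + β) * x ^ (s / 2) / x ^ ((1 + β) / 2) = x ^ ((n : ℝ) + β + 1) := by
      rw [← Real.rpow_add hx, ← Real.rpow_sub hx]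
      congr 1
      rw [hs_def]; ring
    have eY : y ^ ((1 + β) / 2) * y ^ (s / 2) = y ^ ((n : ℝ) + β + 1) := by
      rw [← Real.rpow_add hy0]
      congr 1
      rw [hs_def]; ring
    calc x ^ (1 + β) * c * Real.exp (-(α * (x + y)) / t ^ α) * (y / x) ^ ((1 + β) / 2) *
          Real.exp (-l * y) *
          ((c * (Real.sqrt x * Real.sqrt y)) ^ s / (n.factorial * Real.Gamma (β + 1 + n + 1)))
        = c * Real.exp (-(c * x)) * c ^ s / (n.factorial * Real.Gamma (β + 1 + n + 1)) *
            (x ^ (1 + β) * x ^ (s / 2) / x ^ ((1 + β) / 2)) *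
            (y ^ ((1 + β) / 2) * y ^ (s / 2)) *
            (Real.exp (-(c * y)) * Real.exp (-l * y)) := by
          rw [e1, e3, e4]; ring
      _ = f n y := by
          rw [eX, eY, e2, hf_def, hK_def]; ring
  -- each integral
  have hint : ∀ n : ℕ, (∫ y in Set.Ioi (0 : ℝ), f n y)
      = K n * ((1 / m) ^ ((n : ℝ) + β + 2) * Real.Gamma ((n : ℝ) + β + 2)) := by
    intro n
    rw [hf_def]
    simp only
    rw [MeasureTheory.integral_const_mul]
    congr 1
    have h := integral_rpow_mul_exp_neg_mul_Ioi (a := (n : ℝ) + β + 2) (r := m)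
      (by positivity) hm
    rw [show ((n : ℝ) + β + 2) - 1 = (n : ℝ) + β + 1 from by ring] at h
    exact h
  -- integrability
  have hInt : ∀ n : ℕ, MeasureTheory.IntegrableOn (f n) (Set.Ioi 0) := by
    intro n
    apply MeasureTheory.Integrable.const_mul
    have hn : (0:ℝ) ≤ (n : ℝ) := Nat.cast_nonneg n
    have h := integrableOn_rpow_mul_exp_neg_mul_rpow (s := (n : ℝ) + β + 1) (p := 1) (b := m)
      (by linarith) zero_lt_one hm
    simp only [Real.rpow_one, neg_mul] at h
    exact h
  have hKpos : ∀ n : ℕ, 0 < K n := by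
    intro n
    rw [hK_def]
    have := hΓ n
    positivity
  have hfnn : ∀ n : ℕ, 0 ≤ᵐ[volume.restrict (Set.Ioi (0:ℝ))] f n := by
    intro n
    filter_upwards [ae_restrict_mem measurableSet_Ioi] with y hy
    have hy0 : (0:ℝ) < y := hy
    have := hKpos n
    simp only [hf_def]
    positivity
  have hmeas : ∀ n : ℕ, AEStronglyMeasurable (f n) (volume.restrict (Set.Ioi (0:ℝ))) := by
    intro n
    apply Measurable.aestronglyMeasurable
    simp only [hf_def]
    fun_prop
  have hval : ∀ n : ℕ, K n * ((1 / m) ^ ((n : ℝ) + β + 2) * Real.Gamma ((n : ℝ) + β + 2))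
      = (c ^ (β + 1) * x ^ (β + 1) * c * Real.exp (-(c * x)) * (1 / m) ^ (β + 2)) *
        (c ^ 2 * x / m) ^ n / n.factorial := by
    intro n
    have hΓeq : Real.Gamma (β + 1 + n + 1) = Real.Gamma ((n : ℝ) + β + 2) := by
      congr 1; ring
    have hΓ2 : Real.Gamma ((n : ℝ) + β + 2) ≠ 0 :=
      (Real.Gamma_pos_of_pos (by positivity)).ne'
    have hc1 : c ^ (2 * (n : ℝ) + (β + 1)) = (c ^ 2) ^ n * c ^ (β + 1) := by
      rw [Real.rpow_add hc]
      congr 1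
      rw [show (2 * (n : ℝ)) = ((2 * n : ℕ) : ℝ) by push_cast; ring, Real.rpow_natCast, pow_mul]
    have hx1 : x ^ ((n : ℝ) + β + 1) = x ^ n * x ^ (β + 1) := by
      rw [show ((n : ℝ) + β + 1) = (n : ℝ) + (β + 1) by ring, Real.rpow_add hx,
        Real.rpow_natCast]
    have hm1 : (1 / m) ^ ((n : ℝ) + β + 2) = (1 / m) ^ n * (1 / m) ^ (β + 2) := by
      rw [show ((n : ℝ) + β + 2) = (n : ℝ) + (β + 2) by ring,
        Real.rpow_add (by positivity), Real.rpow_natCast]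
    have hr : (c ^ 2 * x / m) ^ n = (c ^ 2) ^ n * x ^ n * (1 / m) ^ n := by
      rw [← mul_pow, ← mul_pow]
      congr 1
      ring
    have hfac : (n.factorial : ℝ) ≠ 0 := Nat.cast_ne_zero.mpr n.factorial_ne_zero
    rw [hK_def]
    simp only
    rw [hΓeq, hc1, hx1, hm1, hr]
    field_simp
  -- swap integral and sum
  rw [MeasureTheory.setIntegral_congr_fun measurableSet_Ioi hpt]
  rw [MeasureTheory.integral_tsum hmeas ?fin]
  case fin =>
    have hlin : ∀ n : ℕ, (∫⁻ y, ‖f n y‖ₑ ∂(volume.restrict (Set.Ioi (0:ℝ))))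
        = ENNReal.ofReal (∫ y in Set.Ioi (0:ℝ), f n y) := by
      intro n
      rw [MeasureTheory.ofReal_integral_eq_lintegral_ofReal (hInt n) (hfnn n)]
      refine lintegral_congr_ae ?_
      filter_upwards [hfnn n] with y hy
      exact Real.enorm_eq_ofReal hy
    simp_rw [hlin, hint]
    rw [← ENNReal.ofReal_tsum_of_nonneg]
    · exact ENNReal.ofReal_ne_top
    · intro n
      have h1 : (0:ℝ) < (1 / m) ^ ((n : ℝ) + β + 2) := by positivity
      have h2 : (0:ℝ) < Real.Gamma ((n : ℝ) + β + 2) := Real.Gamma_pos_of_pos (by positivity)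
      exact le_of_lt (by have := hKpos n; positivity)
    · exact ((Real.summable_pow_div_factorial (c ^ 2 * x / m)).mul_left
          (c ^ (β + 1) * x ^ (β + 1) * c * Real.exp (-(c * x)) * (1 / m) ^ (β + 2))).congr
          fun n => by rw [hval n]; ring
  have hexp : ∀ C r : ℝ, ∑' n : ℕ, C * r ^ n / n.factorial = C * Real.exp r := by
    intro C r
    rw [Real.exp_eq_exp_ℝ]
    simp only [NormedSpace.exp_eq_tsum_div]
    rw [← tsum_mul_left]
    exact tsum_congr fun n => mul_div_assoc _ _ _
  rw [tsum_congr fun n => (hint n).trans (hval n), hexp]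
  have hD : 1 + l * t ^ α / α = m / c := by
    rw [hm_def, hc_def]
    field_simp
  rw [hD, show -(l * x) / (m / c) = c ^ 2 * x / m - c * x from by
      rw [hm_def]; field_simp; ring,
    Real.exp_sub,
    show (-β - 2 : ℝ) = -(β + 2) by ring, Real.rpow_neg (by positivity : (0:ℝ) ≤ m / c),
    Real.div_rpow hm.le hc.le, inv_div]
  have e7 : (1 / m) ^ (β + 2) = (m ^ (β + 2))⁻¹ := by
    rw [one_div, Real.inv_rpow hm.le]
  have e8 : c ^ (β + 1) * c = c ^ (β + 2) := by
    rw [show (β + 2 : ℝ) = (β + 1) + 1 by ring]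
    exact (Real.rpow_add_one hc.ne' (β + 1)).symm
  have e9 : x ^ (1 + β) = x ^ (β + 1) := by rw [add_comm]
  rw [e7, e9, ← e8, Real.exp_neg]
  have hec : Real.exp (c * x) ≠ 0 := (Real.exp_pos _).ne'
  have hmp : (m : ℝ) ^ (β + 2) ≠ 0 := (Real.rpow_pos_of_pos hm _).ne'
  field_simp
end
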